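/- Let 0<q<1 and let (B_s)_{s≥0} satisfy the q-Brownian hypotheses. Then for all 0 ≤ s < t: E[(B_t − B_s)^4] = (t−s)·((q+2)·t − 3·q·s). -/

import Mathlib

open MeasureTheory Filter

/-- `[n]_q = 1 + q + ⋯ + q^{n-1}`. -/
noncomputable def qNat (q : ℝ) (n : ℕ) : ℝ := ∑ i ∈ Finset.range n, q ^ i

/-- `[n]_q! = [1]_q [2]_q ⋯ [n]_q`. -/
noncomputable def qFact (q : ℝ) (n : ℕ) : ℝ := ∏ i ∈ Finset.range n, qNat q (i + 1)

/-- Monic continuous q-Hermite polynomials: `h_0 = 1`, `h_1 = x`,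
`x·h_n(x;t) = h_{n+1}(x;t) + t·[n]_q·h_{n−1}(x;t)`. -/
noncomputable def qH (q : ℝ) : ℕ → ℝ → ℝ → ℝ
  | 0, _, _ => 1
  | 1, x, _ => x
  | (n + 2), x, t => x * qH q (n + 1) x t - t * qNat q (n + 1) * qH q n x t

/-! Expand `(x - y) ^ 4` in the basis `h_n(x;t)`, with coefficients polynomial in `y`. The
martingale property, through the tower property at time `s`, replaces each `h_n(B_t;t)` by
`h_n(B_s;s)` (the a.s. bounds make everything integrable), so the fourth moment becomes the
expectation of a polynomial in `B_s`, which collapses to `(1 - q)² (t - s) B_s² + const`. Finally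
`E[B_s²] = s` since `h_2(B_s;s) = B_s² - s` is a martingale started from `h_2(0;0) = 0`. -/

lemma Continuous.integrable_comp_of_ae_mem_compact {α E : Type*} [MeasurableSpace α]
    {μ : Measure α} [IsFiniteMeasure μ] [TopologicalSpace E] {F : E → ℝ} (hF : Continuous F)
    {X : α → E} (hX : AEStronglyMeasurable X μ) {K : Set E} (hK : IsCompact K)
    (hXK : ∀ᵐ a ∂μ, X a ∈ K) : Integrable (fun a => F (X a)) μ := by
  obtain ⟨C, hC⟩ := hK.exists_bound_of_continuousOn hF.continuousOn
  exact .of_bound (hF.comp_aestronglyMeasurable hX) C (hXK.mono fun a ha => hC _ ha)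

lemma integral_mul_eq_of_condExp_ae_eq {Ω : Type*} {m m0 : MeasurableSpace Ω} {μ : Measure Ω}
    [IsFiniteMeasure μ] (hm : m ≤ m0) {f f' g : Ω → ℝ} (hf : μ[f | m] =ᵐ[μ] f')
    (hg : StronglyMeasurable[m] g) (hf_int : Integrable f μ) (hfg : Integrable (f * g) μ) :
    ∫ ω, f ω * g ω ∂μ = ∫ ω, f' ω * g ω ∂μ :=
  calc ∫ ω, f ω * g ω ∂μ = ∫ ω, (μ[f * g | m]) ω ∂μ := (integral_condExp hm).symm
    _ = ∫ ω, (μ[f | m] * g) ω ∂μ :=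
      integral_congr_ae (condExp_mul_of_stronglyMeasurable_right hg hfg hf_int)
    _ = ∫ ω, f' ω * g ω ∂μ := integral_congr_ae (hf.mul EventuallyEq.rfl)

lemma qH_zero (q x t : ℝ) : qH q 0 x t = 1 := rfl

lemma qH_one (q x t : ℝ) : qH q 1 x t = x := rfl

lemma qH_two (q x t : ℝ) : qH q 2 x t = x ^ 2 - t := by
  simp [qH, qNat, sq]

lemma qH_three (q x t : ℝ) : qH q 3 x t = x ^ 3 - (2 + q) * t * x := by
  simp [qH, qNat, Finset.sum_range_succ]
  ring

lemma qH_four (q x t : ℝ) :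
    qH q 4 x t = x ^ 4 - (3 + 2 * q + q ^ 2) * t * x ^ 2 + (1 + q + q ^ 2) * t ^ 2 := by
  simp [qH, qNat, Finset.sum_range_succ]
  ring

theorem continuous_qH (q t : ℝ) : ∀ n, Continuous fun x => qH q n x t
  | 0 => continuous_const
  | 1 => continuous_id
  | n + 2 => (continuous_id.mul (continuous_qH q t (n + 1))).sub
      (continuous_const.mul (continuous_qH q t n))

noncomputable def subPowFourCoeff (q t : ℝ) : ℕ → ℝ → ℝ
  | 0, y => (2 + q) * t ^ 2 + 6 * t * y ^ 2 + y ^ 4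
  | 1, y => -4 * (2 + q) * t * y - 4 * y ^ 3
  | 2, y => (3 + 2 * q + q ^ 2) * t + 6 * y ^ 2
  | 3, y => -4 * y
  | 4, _ => 1
  | _, _ => 0

lemma continuous_subPowFourCoeff (q t : ℝ) (n : ℕ) : Continuous (subPowFourCoeff q t n) := by
  match n with
  | 0 | 1 | 2 | 3 | 4 | _ + 5 => unfold subPowFourCoeff; fun_prop

lemma sub_pow_four_eq_sum_qH_mul (q t x y : ℝ) :
    (x - y) ^ 4 = ∑ n ∈ Finset.range 5, qH q n x t * subPowFourCoeff q t n y := by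
  simp only [Finset.sum_range_succ, Finset.sum_range_zero, subPowFourCoeff, qH_zero, qH_one,
    qH_two, qH_three, qH_four]
  ring

lemma sum_qH_mul_subPowFourCoeff (q s t y : ℝ) :
    ∑ n ∈ Finset.range 5, qH q n y s * subPowFourCoeff q t n y =
      (1 - q) ^ 2 * (t - s) * y ^ 2 +
        ((2 + q) * t ^ 2 - (3 + 2 * q + q ^ 2) * t * s + (1 + q + q ^ 2) * s ^ 2) := by
  simp only [Finset.sum_range_succ, Finset.sum_range_zero, subPowFourCoeff, qH_zero, qH_one,
    qH_two, qH_three, qH_four]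
  ring

section QBrownian

variable {Ω : Type*} [m0 : MeasurableSpace Ω] {μ : Measure Ω} {ℱ : Filtration ℝ m0} {q : ℝ}
  {B : ℝ → Ω → ℝ} {C : ℝ → ℝ}

lemma integrable_qH_mul_comp [IsFiniteMeasure μ] (hadp : Adapted ℱ B)
    (hbdd : ∀ s : ℝ, 0 ≤ s → ∀ᵐ ω ∂μ, |B s ω| ≤ C s) {s u : ℝ} (hs : 0 ≤ s) (hu : 0 ≤ u)
    (n : ℕ) {g : ℝ → ℝ} (hg : Continuous g) :
    Integrable (fun ω => qH q n (B u ω) u * g (B s ω)) μ := by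
  have hF : Continuous fun p : ℝ × ℝ => qH q n p.1 u * g p.2 :=
    ((continuous_qH q u n).comp continuous_fst).mul (hg.comp continuous_snd)
  refine hF.integrable_comp_of_ae_mem_compact (X := fun ω => (B u ω, B s ω))
    (K := Set.Icc (-C u) (C u) ×ˢ Set.Icc (-C s) (C s))
    (((hadp u).mono (ℱ.le u) le_rfl).aestronglyMeasurable.prodMk
      ((hadp s).mono (ℱ.le s) le_rfl).aestronglyMeasurable)
    (isCompact_Icc.prod isCompact_Icc) ?_
  filter_upwards [hbdd u hu, hbdd s hs] with ω hBu hBs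
  exact ⟨abs_le.mp hBu, abs_le.mp hBs⟩

lemma integral_qH_mul_comp_eq [IsFiniteMeasure μ] (hadp : Adapted ℱ B)
    (hbdd : ∀ s : ℝ, 0 ≤ s → ∀ᵐ ω ∂μ, |B s ω| ≤ C s)
    (hmart : ∀ (n : ℕ) (s u : ℝ), 0 ≤ s → s ≤ u →
      μ[fun ω => qH q n (B u ω) u | ℱ s] =ᵐ[μ] fun ω => qH q n (B s ω) s)
    {s u : ℝ} (hs : 0 ≤ s) (hsu : s ≤ u) (n : ℕ) {g : ℝ → ℝ} (hg : Continuous g) :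
    ∫ ω, qH q n (B u ω) u * g (B s ω) ∂μ = ∫ ω, qH q n (B s ω) s * g (B s ω) ∂μ := by
  have hu := hs.trans hsu
  have hqH_int : Integrable (fun ω => qH q n (B u ω) u) μ := by
    simpa using integrable_qH_mul_comp (q := q) hadp hbdd hs hu n continuous_const (g := fun _ => 1)
  exact integral_mul_eq_of_condExp_ae_eq (ℱ.le s) (hmart n s u hs hsu)
    (hg.comp_stronglyMeasurable (hadp s).stronglyMeasurable) hqH_int
    (integrable_qH_mul_comp hadp hbdd hs hu n hg)

lemma integral_sum_qH_mul_comp_eq [IsFiniteMeasure μ] (hadp : Adapted ℱ B)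
    (hbdd : ∀ s : ℝ, 0 ≤ s → ∀ᵐ ω ∂μ, |B s ω| ≤ C s)
    (hmart : ∀ (n : ℕ) (s u : ℝ), 0 ≤ s → s ≤ u →
      μ[fun ω => qH q n (B u ω) u | ℱ s] =ᵐ[μ] fun ω => qH q n (B s ω) s)
    {s u : ℝ} (hs : 0 ≤ s) (hsu : s ≤ u) (S : Finset ℕ) {P : ℕ → ℝ → ℝ}
    (hP : ∀ n, Continuous (P n)) :
    ∫ ω, ∑ n ∈ S, qH q n (B u ω) u * P n (B s ω) ∂μ =
      ∫ ω, ∑ n ∈ S, qH q n (B s ω) s * P n (B s ω) ∂μ := by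
  rw [integral_finsetSum _ fun n _ => integrable_qH_mul_comp hadp hbdd hs (hs.trans hsu) n (hP n),
    integral_finsetSum _ fun n _ => integrable_qH_mul_comp hadp hbdd hs hs n (hP n)]
  exact Finset.sum_congr rfl fun n _ => integral_qH_mul_comp_eq hadp hbdd hmart hs hsu n (hP n)

lemma integrable_sq [IsFiniteMeasure μ] (hadp : Adapted ℱ B)
    (hbdd : ∀ s : ℝ, 0 ≤ s → ∀ᵐ ω ∂μ, |B s ω| ≤ C s) {s : ℝ} (hs : 0 ≤ s) :
    Integrable (fun ω => B s ω ^ 2) μ :=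
  (continuous_pow 2).integrable_comp_of_ae_mem_compact
    ((hadp s).mono (ℱ.le s) le_rfl).aestronglyMeasurable isCompact_Icc
    ((hbdd s hs).mono fun _ hB => abs_le.mp hB)

lemma integral_sq_eq [IsProbabilityMeasure μ] (hadp : Adapted ℱ B) (hB0 : ∀ ω, B 0 ω = 0)
    (hbdd : ∀ s : ℝ, 0 ≤ s → ∀ᵐ ω ∂μ, |B s ω| ≤ C s)
    (hmart : ∀ (n : ℕ) (s u : ℝ), 0 ≤ s → s ≤ u →
      μ[fun ω => qH q n (B u ω) u | ℱ s] =ᵐ[μ] fun ω => qH q n (B s ω) s)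
    {s : ℝ} (hs : 0 ≤ s) : ∫ ω, B s ω ^ 2 ∂μ = s := by
  have h := integral_qH_mul_comp_eq hadp hbdd hmart le_rfl hs 2 (continuous_const (y := (1 : ℝ)))
  simp only [qH_two, hB0, mul_one] at h
  rw [integral_sub (integrable_sq hadp hbdd hs) (integrable_const s)] at h
  simpa [sub_eq_zero] using h

end QBrownian

theorem q_brownian_fourth_moment_of_increment_general
    {Ω : Type*} [m0 : MeasurableSpace Ω] (μ : Measure Ω) [IsProbabilityMeasure μ]
    (ℱ : Filtration ℝ m0) (q : ℝ)
    (B : ℝ → Ω → ℝ) (hadp : Adapted ℱ B) (hB0 : ∀ ω, B 0 ω = 0)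
    (hbdd : ∀ s : ℝ, 0 ≤ s → ∀ᵐ ω ∂μ, |B s ω| ≤ 2 * Real.sqrt s / Real.sqrt (1 - q))
    (hmart : ∀ (n : ℕ) (s u : ℝ), 0 ≤ s → s ≤ u →
      μ[fun ω => qH q n (B u ω) u | ℱ s] =ᵐ[μ] fun ω => qH q n (B s ω) s)
    (s t : ℝ) (hs : 0 ≤ s) (hst : s < t) :
    ∫ ω, (B t ω - B s ω) ^ 4 ∂μ = (t - s) * ((q + 2) * t - 3 * q * s) := by
  calc ∫ ω, (B t ω - B s ω) ^ 4 ∂μ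
      = ∫ ω, ∑ n ∈ Finset.range 5, qH q n (B t ω) t * subPowFourCoeff q t n (B s ω) ∂μ := by
        simp only [sub_pow_four_eq_sum_qH_mul q t]
    _ = ∫ ω, ∑ n ∈ Finset.range 5, qH q n (B s ω) s * subPowFourCoeff q t n (B s ω) ∂μ :=
        integral_sum_qH_mul_comp_eq hadp hbdd hmart hs hst.le _ (continuous_subPowFourCoeff q t)
    _ = (1 - q) ^ 2 * (t - s) * ∫ ω, B s ω ^ 2 ∂μ +
          ((2 + q) * t ^ 2 - (3 + 2 * q + q ^ 2) * t * s + (1 + q + q ^ 2) * s ^ 2) := by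
        simp only [sum_qH_mul_subPowFourCoeff]
        rw [integral_add ((integrable_sq hadp hbdd hs).const_mul _) (integrable_const _),
          integral_const_mul]
        simp
    _ = (t - s) * ((q + 2) * t - 3 * q * s) := by
        rw [integral_sq_eq hadp hB0 hbdd hmart hs]
        ring

/-- for the q-Brownian motion and `0 ≤ s < t`,
`E[(B_t − B_s)^4] = (t−s)((q+2)t − 3qs)`. -/
theorem q_brownian_fourth_moment_of_increment
    {Ω : Type*} [m0 : MeasurableSpace Ω] (μ : Measure Ω) [IsProbabilityMeasure μ]
    (ℱ : Filtration ℝ m0) (q : ℝ) (hq0 : 0 < q) (hq1 : q < 1)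
    (B : ℝ → Ω → ℝ) (hadp : Adapted ℱ B) (hB0 : ∀ ω, B 0 ω = 0)
    (hbdd : ∀ s : ℝ, 0 ≤ s → ∀ᵐ ω ∂μ, |B s ω| ≤ 2 * Real.sqrt s / Real.sqrt (1 - q))
    (hmart : ∀ (n : ℕ) (s u : ℝ), 0 ≤ s → s ≤ u →
      μ[fun ω => qH q n (B u ω) u | ℱ s] =ᵐ[μ] fun ω => qH q n (B s ω) s)
    (horth : ∀ s : ℝ, 0 < s → ∀ m n : ℕ,
      ∫ ω, qH q n (B s ω) s * qH q m (B s ω) s ∂μ =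
        if m = n then qFact q n * s ^ n else 0)
    (s t : ℝ) (hs : 0 ≤ s) (hst : s < t) :
    ∫ ω, (B t ω - B s ω) ^ 4 ∂μ = (t - s) * ((q + 2) * t - 3 * q * s) :=
  q_brownian_fourth_moment_of_increment_general (m0 := m0) μ ℱ q B hadp hB0 hbdd hmart s t hs hst
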